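/- arXiv:2504.17057 — 7 statements merged into one kernel-verified Lean document; each statement's English description precedes it below -/
import Mathlib

section
/- Let p be a prime and i, m positive integers such that m / gcd(i,m) is even. Then gcd(p^i + 1, p^m - 1) = p^{gcd(i,m)} + 1. -/
/-! Let `d = gcd i m`. Since `m / d` is even, `i / d` is odd and `2d ∣ m`. For any `x` in a monoid
with distributive negation, `x ^ i = -1 ∧ x ^ m = 1` is then equivalent to `x ^ d = -1`: forward,
the order of `x` divides `gcd (2i, 2m) = 2d`, so `x ^ i = x ^ d` because `i / d` is odd; backward,
raise `x ^ d = -1` to the odd power `i / d` and to the even power `m / d`. Applied to `x = a` in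
`ZMod n`, the common divisors of `a ^ i + 1` and `a ^ m - 1` are exactly the divisors of `a ^ d + 1`. -/

namespace Nat

variable {i m : ℕ}

theorem exists_odd_eq_gcd_mul_of_even_div_gcd (h : Even (m / i.gcd m)) :
    ∃ t, Odd t ∧ i = i.gcd m * t := by
  rcases Nat.eq_zero_or_pos (i.gcd m) with hd | hd
  · exact ⟨1, odd_one, by rw [hd, (Nat.gcd_eq_zero_iff.mp hd).1]⟩
  · refine ⟨i / i.gcd m, ?_, (Nat.mul_div_cancel' (Nat.gcd_dvd_left i m)).symm⟩
    exact (Nat.Coprime.coprime_dvd_right h.two_dvd (Nat.coprime_div_gcd_div_gcd hd)).odd_of_right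

theorem two_mul_gcd_dvd_of_even_div_gcd (h : Even (m / i.gcd m)) : 2 * i.gcd m ∣ m := by
  obtain ⟨k, hk⟩ := h.two_dvd
  exact ⟨k, by rw [mul_comm 2, mul_assoc, ← hk, Nat.mul_div_cancel' (Nat.gcd_dvd_right i m)]⟩

end Nat

theorem pow_eq_neg_one_and_pow_eq_one_iff {M : Type*} [Monoid M] [HasDistribNeg M] {x : M}
    {i m : ℕ} (h : Even (m / i.gcd m)) : x ^ i = -1 ∧ x ^ m = 1 ↔ x ^ i.gcd m = -1 := by
  obtain ⟨t, ht, hit⟩ := Nat.exists_odd_eq_gcd_mul_of_even_div_gcd h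
  obtain ⟨k, hmk⟩ := Nat.two_mul_gcd_dvd_of_even_div_gcd h
  set d := i.gcd m
  constructor
  · rintro ⟨hi, hm⟩
    have hsq : x ^ (2 * d) = 1 := by
      rw [← Nat.gcd_mul_left 2 i m, pow_gcd_eq_one]
      constructor
      · rw [mul_comm, pow_mul, hi, neg_one_sq]
      · rw [mul_comm, pow_mul, hm, one_pow]
    obtain ⟨s, rfl⟩ := ht
    calc x ^ d = (x ^ (2 * d)) ^ s * x ^ d := by rw [hsq, one_pow, one_mul]
      _ = x ^ i := by rw [← pow_mul, ← pow_add, hit]; congr 1; ring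
      _ = -1 := hi
  · intro hd
    constructor
    · rw [hit, pow_mul, hd, ht.neg_one_pow]
    · rw [hmk, mul_comm 2 d, mul_assoc, pow_mul, pow_mul, hd, neg_one_sq, one_pow]

namespace ZMod

variable {a n k : ℕ}

theorem natCast_pow_eq_neg_one_iff : (a : ZMod n) ^ k = -1 ↔ n ∣ a ^ k + 1 := by
  rw [← ZMod.natCast_eq_zero_iff, eq_neg_iff_add_eq_zero]
  push_cast
  rfl

theorem natCast_pow_eq_one_iff (ha : 0 < a) : (a : ZMod n) ^ k = 1 ↔ n ∣ a ^ k - 1 := by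
  rw [← Nat.modEq_iff_dvd' (Nat.one_le_pow _ _ ha), ← ZMod.natCast_eq_natCast_iff, eq_comm]
  push_cast
  rfl

end ZMod

namespace Nat

variable {a i m : ℕ}

theorem dvd_pow_add_one_and_dvd_pow_sub_one_iff (ha : 0 < a) (h : Even (m / i.gcd m)) {n : ℕ} :
    n ∣ a ^ i + 1 ∧ n ∣ a ^ m - 1 ↔ n ∣ a ^ i.gcd m + 1 := by
  rw [← ZMod.natCast_pow_eq_neg_one_iff, ← ZMod.natCast_pow_eq_one_iff ha,
    ← ZMod.natCast_pow_eq_neg_one_iff]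
  exact pow_eq_neg_one_and_pow_eq_one_iff h

theorem gcd_pow_add_one_pow_sub_one (ha : 0 < a) (h : Even (m / i.gcd m)) :
    (a ^ i + 1).gcd (a ^ m - 1) = a ^ i.gcd m + 1 :=
  Nat.dvd_antisymm
    ((dvd_pow_add_one_and_dvd_pow_sub_one_iff ha h).mp (Nat.dvd_gcd_iff.mp dvd_rfl))
    (Nat.dvd_gcd_iff.mpr ((dvd_pow_add_one_and_dvd_pow_sub_one_iff ha h).mpr dvd_rfl))

end Nat

theorem stmt_3_general (p i m : ℕ) (hp : p.Prime)
    (h : Even (m / Nat.gcd i m)) :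
    Nat.gcd (p ^ i + 1) (p ^ m - 1) = p ^ Nat.gcd i m + 1 :=
  Nat.gcd_pow_add_one_pow_sub_one hp.pos h

theorem stmt_3 (p i m : ℕ) (hp : p.Prime) (hi : 0 < i) (hm : 0 < m)
    (h : Even (m / Nat.gcd i m)) :
    Nat.gcd (p ^ i + 1) (p ^ m - 1) = p ^ Nat.gcd i m + 1 :=
  stmt_3_general p i m hp h
end

section
/- Let p be an odd prime, m an even positive integer, q = p^k with 1 ≤ k ≤ m - 1 and m / gcd(k,m) odd. Then -1 is not a (q-1)-st power in the multiplicative group of the field F_{p^m}, i.e., there is no x in F_{p^m}^× with x^{q-1} = -1. -/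
/-!
Write `g = gcd k m`, `s = m / g` and `S = ∑_{i < s} p^{g i}`, so that `p^m - 1 = (p^g - 1) S`
with `S` odd (a sum of `s` odd terms), and `p^g - 1 ∣ p^k - 1`. If `x^{p^k - 1} = -1`, then
`x^{(p^k - 1) S} = (-1)^S = -1`, while `(p^k - 1) S` is a multiple of `p^m - 1`, the order of
`F^×`, so `x^{(p^k - 1) S} = 1`. Hence `-1 = 1`, impossible in a field of odd order.
-/

open Finset

theorem Nat.odd_geom_sum {x n : ℕ} (hx : Odd x) (hn : Odd n) : Odd (∑ i ∈ range n, x ^ i) := by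
  simpa [Finset.odd_sum_iff_odd_card_odd, hx.pow] using hn

theorem neg_one_eq_one_of_pow_eq_neg_one {M : Type*} [Monoid M] [HasDistribNeg M] {x : M}
    {a b e : ℕ} (ha : x ^ a = -1) (hb : x ^ b = 1) (hab : b ∣ a * e) (he : Odd e) :
    (-1 : M) = 1 := by
  obtain ⟨c, hc⟩ := hab
  calc (-1 : M) = (x ^ a) ^ e := by rw [ha, he.neg_one_pow]
    _ = 1 := by rw [← pow_mul, hc, pow_mul, hb, one_pow]

theorem Nat.exists_odd_pow_sub_one_dvd_mul {p k m : ℕ} (hp : Odd p) (hkm : Odd (m / k.gcd m)) :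
    ∃ e, Odd e ∧ p ^ m - 1 ∣ (p ^ k - 1) * e := by
  set g := k.gcd m
  refine ⟨∑ i ∈ range (m / g), (p ^ g) ^ i, Nat.odd_geom_sum hp.pow hkm, ?_⟩
  have hfactor : p ^ m - 1 = (p ^ g - 1) * ∑ i ∈ range (m / g), (p ^ g) ^ i := by
    rw [mul_comm, geom_sum_mul_of_one_le hp.pow.pos, ← pow_mul,
      Nat.mul_div_cancel' (Nat.gcd_dvd_right k m)]
  rw [hfactor]
  exact mul_dvd_mul_right (Nat.pow_sub_one_dvd_pow_sub_one p (Nat.gcd_dvd_left k m)) _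

theorem FiniteField.neg_one_ne_one_of_odd_card {F : Type*} [Field F] [Fintype F]
    (hF : Odd (Fintype.card F)) : (-1 : F) ≠ 1 :=
  Ring.neg_one_ne_one_of_char_ne_two fun h =>
    Nat.not_even_iff_odd.mpr hF (Nat.even_iff.mpr (FiniteField.even_card_iff_char_two.mp h))

theorem stmt_4_general (p m k : ℕ) (hodd : Odd p) (hko : Odd (m / Nat.gcd k m))
    (F : Type) [Field F] [Fintype F] (hF : Fintype.card F = p ^ m) :
    ¬ ∃ x : F, x ≠ 0 ∧ x ^ (p ^ k - 1) = -1 := by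
  rintro ⟨x, hx0, hx⟩
  obtain ⟨e, he, hdvd⟩ := Nat.exists_odd_pow_sub_one_dvd_mul (k := k) hodd hko
  have hunit : x ^ (p ^ m - 1) = 1 := hF ▸ FiniteField.pow_card_sub_one_eq_one x hx0
  exact FiniteField.neg_one_ne_one_of_odd_card (hF ▸ hodd.pow)
    (neg_one_eq_one_of_pow_eq_neg_one hx hunit hdvd he)

theorem stmt_4 (p m k : ℕ) (hp : p.Prime) (hodd : Odd p) (hm : Even m) (hm0 : 0 < m)
    (hk1 : 1 ≤ k) (hk2 : k ≤ m - 1) (hko : Odd (m / Nat.gcd k m))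
    (F : Type) [Field F] [Fintype F] (hF : Fintype.card F = p ^ m) :
    ¬ ∃ x : F, x ≠ 0 ∧ x ^ (p ^ k - 1) = -1 :=
  stmt_4_general p m k hodd hko F hF
end

section
/- Let M = F_{p^m} with p odd, m even, q = p^k with m/gcd(k,m) odd. For any nonzero u in M, the F_p-linear map f : M → M defined by f(x) = x u^q + x^q u is bijective. -/
theorem stmt_7 (p m k : ℕ) (hp : p.Prime) (hodd : Odd p) (hm : Even m) (hm0 : 0 < m)
    (hk1 : 1 ≤ k) (hk2 : k ≤ m - 1) (hko : Odd (m / Nat.gcd k m))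
    (F : Type) [Field F] [Fintype F] (hF : Fintype.card F = p ^ m)
    (u : F) (hu : u ≠ 0) :
    Function.Bijective (fun x : F => x * u ^ p ^ k + x ^ p ^ k * u) := by
  haveI : Fact p.Prime := ⟨hp⟩
  -- characteristic of F is p
  haveI hchar : CharP F p := by
    haveI := ringChar.charP F
    obtain ⟨n, hprime, hcard⟩ := FiniteField.card F (ringChar F)
    have hdvd : p ∣ ringChar F := by
      have h1 : p ∣ ringChar F ^ (n : ℕ) := by
        rw [← hcard, hF]; exact dvd_pow_self p hm0.ne'
      exact hp.dvd_of_dvd_pow h1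
    have heq : ringChar F = p := ((Nat.prime_dvd_prime_iff_eq hp hprime).mp hdvd).symm
    exact heq ▸ ringChar.charP F
  have two_ne : (2 : F) ≠ 0 := by
    have hnd : ¬ (p ∣ 2) := by
      intro h
      have : p = 2 := (Nat.prime_dvd_prime_iff_eq hp Nat.prime_two).mp h
      rw [this] at hodd
      exact (Nat.not_odd_iff_even.mpr even_two) hodd
    have h2 : ((2 : ℕ) : F) ≠ 0 := by
      rw [Ne, CharP.cast_eq_zero_iff F p]; exact hnd
    exact_mod_cast h2
  rw [← Finite.injective_iff_bijective]
  intro a b hab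
  simp only at hab
  by_contra hab'
  have hz0 : a - b ≠ 0 := sub_ne_zero.mpr hab'
  have hzq : (a - b) ^ p ^ k = a ^ p ^ k - b ^ p ^ k := sub_pow_char_pow a b k
  have hz : (a - b) * u ^ p ^ k + (a - b) ^ p ^ k * u = 0 := by
    rw [hzq]; linear_combination hab
  set y : F := (a - b) / u with hy
  have hy0 : y ≠ 0 := div_ne_zero hz0 hu
  have hyq : y ^ p ^ k = -y := by
    rw [hy, div_pow, div_eq_iff (pow_ne_zero _ hu)]
    field_simp
    linear_combination hz
  -- y ^ (p ^ m) = y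
  have hym : y ^ p ^ m = y := by rw [← hF]; exact FiniteField.pow_card y
  have hB : ∀ s : ℕ, y ^ p ^ (m * s) = y := by
    intro s
    induction s with
    | zero => simp
    | succ n ih =>
      have h1 : p ^ (m * (n + 1)) = p ^ (m * n) * p ^ m := by
        rw [← pow_add]; ring_nf
      rw [h1, pow_mul, ih, hym]
  have hA : ∀ n : ℕ, y ^ p ^ (k * n) = (-1 : F) ^ n * y := by
    intro n
    induction n with
    | zero => simp
    | succ n ih =>
      have h1 : p ^ (k * (n + 1)) = p ^ (k * n) * p ^ k := by
        rw [← pow_add]; ring_nf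
      rw [h1, pow_mul, ih, mul_pow, hyq, ← pow_mul, Nat.mul_comm n (p ^ k), pow_mul,
        (hodd.pow : Odd (p ^ k)).neg_one_pow]
      ring
  -- gcd setup
  set g := Nat.gcd k m with hgdef
  have hg0 : 0 < g := Nat.gcd_pos_of_pos_left m hk1
  have hgk : g ∣ k := Nat.gcd_dvd_left k m
  have hgm : g ∣ m := Nat.gcd_dvd_right k m
  set k' := k / g with hk'def
  set m' := m / g with hm'def
  have hkk : g * k' = k := Nat.mul_div_cancel' hgk
  have hmm : g * m' = m := Nat.mul_div_cancel' hgm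
  have hcop : Nat.Coprime k' m' := Nat.coprime_div_gcd_div_gcd hg0
  have hm'1 : 1 < m' := by
    rcases Nat.lt_or_ge 1 m' with h | h
    · exact h
    · exfalso
      interval_cases m'
      · omega
      · -- m' = 1 means m = g ≤ k, contradicting k ≤ m - 1
        have : m = g := by omega
        have hgle : g ≤ k := Nat.le_of_dvd hk1 hgk
        omega
  obtain ⟨j, -, hj⟩ := Nat.exists_mul_mod_eq_one_of_coprime hcop hm'1
  -- k * j = m * t + g
  have hkj : k * j = m * (k' * j / m') + g := by
    have hdm := Nat.div_add_mod (k' * j) m'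
    calc k * j = g * (k' * j) := by rw [← hkk]; ring
    _ = g * (m' * (k' * j / m') + k' * j % m') := by rw [hdm]
    _ = m * (k' * j / m') + g := by rw [hj, ← hmm]; ring
  set t := k' * j / m'
  have hgy : y ^ p ^ g = (-1 : F) ^ j * y := by
    have h1 := hA j
    rw [hkj, pow_add, pow_mul, hB t] at h1
    exact h1
  have hparity : ∀ a : ℕ, (-1 : F) ^ (a * p ^ g) = (-1 : F) ^ a := by
    intro a
    rw [Nat.mul_comm, pow_mul, (hodd.pow : Odd (p ^ g)).neg_one_pow]
  have hC : ∀ n : ℕ, y ^ p ^ (g * n) = (-1 : F) ^ (j * n) * y := by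
    intro n
    induction n with
    | zero => simp
    | succ n ih =>
      have h1 : p ^ (g * (n + 1)) = p ^ (g * n) * p ^ g := by
        rw [← pow_add]; ring_nf
      rw [h1, pow_mul, ih, mul_pow, hgy, ← pow_mul, hparity,
        Nat.mul_add, Nat.mul_one, pow_add]
      ring
  -- at m': ((-1)^j)^{m'} = 1
  have hCm := hC m'
  rw [hmm, hym] at hCm
  have hone : (-1 : F) ^ (j * m') = 1 :=
    mul_right_cancel₀ hy0 (by rw [one_mul]; exact hCm.symm)
  have hj1 : (-1 : F) ^ j = 1 := by
    rcases Nat.even_or_odd j with he | ho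
    · exact he.neg_one_pow
    · exfalso
      rw [(ho.mul hko).neg_one_pow] at hone
      apply two_ne
      linear_combination -hone
  have hCk := hC k'
  rw [hkk, hyq, pow_mul, hj1, one_pow, one_mul] at hCk
  -- hCk : -y = y
  apply hy0
  have h2y : (2 : F) * y = 0 := by linear_combination -hCk
  rcases mul_eq_zero.mp h2y with h | h
  · exact absurd h two_ne
  · exact h
end

section
/- Let M = F_{p^m} with p odd and m even, let r = p^{k+m/2}, and let A be a non-square element of M^×. For any nonzero v in M, the F_p-linear map f : M → M defined by f(x) = x^r v + A x v^r is bijective. -/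
/-!
The map `f x = x ^ q * v + A * x * v ^ q` with `q = p ^ (k + m / 2)` is additive, so it suffices
to show that its kernel is trivial. Writing a kernel element as `x = w * v` gives
`f x = v ^ (q + 1) * (w ^ q + A * w)`, so a nonzero kernel element would give `A = -w ^ (q - 1)`.
But `-1` is a square in a field of order `p ^ m` with `m` even and `q - 1` is even, so `-w ^ (q - 1)`
is a square while `A` is not.
-/

open Function

section Kernel

variable {R : Type*} [CommRing R]

lemma pow_mul_add_mul_mul_pow_mul (q : ℕ) (A v w : R) :
    (w * v) ^ q * v + A * (w * v) * v ^ q = v ^ (q + 1) * (w ^ q + A * w) := by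
  ring

lemma eq_neg_pow_sub_one_of_pow_add_mul_eq_zero [IsDomain R] {q : ℕ} (hq : 0 < q) {A w : R}
    (hw : w ≠ 0) (h : w ^ q + A * w = 0) : A = -w ^ (q - 1) := by
  apply mul_right_cancel₀ hw
  rw [neg_mul, ← pow_succ, Nat.sub_add_cancel hq]
  linear_combination h

end Kernel

lemma injective_pow_mul_add_mul_mul_pow {F : Type*} [Field F] (p s : ℕ) [ExpChar F p] {A v : F}
    (hv : v ≠ 0) (hA : ∀ w : F, w ≠ 0 → A ≠ -w ^ (p ^ s - 1)) :
    Injective fun x : F => x ^ p ^ s * v + A * x * v ^ p ^ s := by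
  intro x y hxy
  set w := (x - y) / v
  have hxy_sub : x - y = w * v := (div_mul_cancel₀ _ hv).symm
  have hkernel : (w * v) ^ p ^ s * v + A * (w * v) * v ^ p ^ s = 0 := by
    rw [← hxy_sub, sub_pow_expChar_pow]
    linear_combination hxy
  rw [pow_mul_add_mul_mul_pow_mul, mul_eq_zero] at hkernel
  have hw : w = 0 := by
    by_contra hw
    exact hA w hw <| eq_neg_pow_sub_one_of_pow_add_mul_eq_zero (expChar_pow_pos F p s) hw
      (hkernel.resolve_left (pow_ne_zero _ hv))
  rwa [hw, zero_mul, sub_eq_zero] at hxy_sub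

lemma FiniteField.isSquare_neg_one_of_card_eq_sq {F : Type*} [Field F] [Fintype F] {n : ℕ}
    (hn : Odd n) (hF : Fintype.card F = n ^ 2) : IsSquare (-1 : F) := by
  rw [FiniteField.isSquare_neg_one_iff, hF]
  obtain ⟨t, rfl⟩ := hn
  ring_nf
  omega

theorem stmt_8_general (p m k : ℕ) (hp : p.Prime) (hodd : Odd p) (hm : Even m)
    (F : Type) [Field F] [Fintype F] (hF : Fintype.card F = p ^ m)
    (A : F) (hA : ¬ IsSquare A) (v : F) (hv : v ≠ 0) :
    Function.Bijective
      (fun x : F => x ^ p ^ (k + m / 2) * v + A * x * v ^ p ^ (k + m / 2)) := by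
  have : Fact p.Prime := ⟨hp⟩
  have : CharP F p := charP_of_card_eq_prime_pow hF
  have hneg_one : IsSquare (-1 : F) := by
    refine FiniteField.isSquare_neg_one_of_card_eq_sq (hodd.pow (n := m / 2)) ?_
    rw [hF, ← pow_mul, Nat.div_mul_cancel hm.two_dvd]
  rw [← Finite.injective_iff_bijective]
  refine injective_pow_mul_add_mul_mul_pow p _ hv fun w _ hAw => hA ?_
  rw [hAw, neg_eq_neg_one_mul]
  exact hneg_one.mul (Even.isSquare_pow (Nat.Odd.sub_odd hodd.pow odd_one) w)

theorem stmt_8 (p m k : ℕ) (hp : p.Prime) (hodd : Odd p) (hm : Even m) (hm0 : 0 < m)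
    (hk1 : 1 ≤ k) (hk2 : k ≤ m - 1)
    (F : Type) [Field F] [Fintype F] (hF : Fintype.card F = p ^ m)
    (A : F) (hA : ¬ IsSquare A) (v : F) (hv : v ≠ 0) :
    Function.Bijective
      (fun x : F => x ^ p ^ (k + m / 2) * v + A * x * v ^ p ^ (k + m / 2)) :=
  stmt_8_general p m k hp hodd hm F hF A hA v hv
end

section
/- Let M = F_{p^m}, p odd, m even, q = p^k with m/gcd(k,m) odd. Let f, g : M → M be functions and suppose for each w ∈ M there is u_w ∈ M with f(x^q u_w + x u_w^q) = (g(x))^q w + g(x) w^q for all x ∈ M. Then either g = 0 or the map w ↦ u_w is a bijection of M. -/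
/-!
If `g x₀ = c ≠ 0`, then `u w₁ = u w₂` gives `L_c w₁ = L_c w₂` for the additive map
`L_c w = c^q w + c w^q`, so it suffices that `L_c` has trivial kernel. Writing a kernel element as
`c t`, one gets `c^(q+1) (t^q + t) = 0`, i.e. `t^q = -t`. Iterating `a = m / gcd(k, m)` times gives
`t^(q^a) = (-1)^a t = -t`; but `q^a = (p^m)^(k / gcd(k, m))` is a power of `|M|`, so `t^(q^a) = t`.
Hence `2t = 0`, and `t = 0` since `p` is odd.
-/

theorem pow_pow_eq_neg_one_pow_mul {R : Type*} [Monoid R] [HasDistribNeg R] {n : ℕ} (hn : Odd n)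
    {t : R} (ht : t ^ n = -t) (a : ℕ) : t ^ n ^ a = (-1) ^ a * t := by
  induction a with
  | zero => simp
  | succ a ih =>
    rw [pow_succ', pow_mul, ht, hn.pow.neg_pow, ih, pow_succ', neg_one_mul, neg_mul]

namespace FiniteField

variable {F : Type*} [Field F] [Fintype F] {p m k : ℕ}

theorem eq_zero_of_pow_eq_neg (hF : Fintype.card F = p ^ m) (hp : Odd p)
    (hmk : Odd (m / Nat.gcd k m)) {t : F} (ht : t ^ p ^ k = -t) : t = 0 := by
  have hexp : (p ^ k) ^ (m / Nat.gcd k m) = Fintype.card F ^ (k / Nat.gcd k m) := by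
    rw [hF, ← pow_mul, ← pow_mul, ← Nat.mul_div_assoc _ (Nat.gcd_dvd_right k m),
      ← Nat.mul_div_assoc _ (Nat.gcd_dvd_left k m), mul_comm]
  have hself : t = -t :=
    calc t = t ^ Fintype.card F ^ (k / Nat.gcd k m) := (pow_card_pow _ t).symm
      _ = (-1) ^ (m / Nat.gcd k m) * t := by rw [← hexp, pow_pow_eq_neg_one_pow_mul hp.pow ht]
      _ = -t := by rw [hmk.neg_one_pow, neg_one_mul]
  have htwo : (2 : F) ≠ 0 := by
    refine Ring.two_ne_zero fun hchar => ?_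
    have := even_card_iff_char_two.mp hchar
    rw [hF, ← Nat.even_iff] at this
    exact Nat.not_even_iff_odd.mpr hp.pow this
  have : (2 : F) * t = 0 := by linear_combination hself
  exact (mul_eq_zero.mp this).resolve_left htwo

theorem injective_pow_mul_add_mul_pow (hp : p.Prime) (hF : Fintype.card F = p ^ m) (hodd : Odd p)
    (hmk : Odd (m / Nat.gcd k m)) {c : F} (hc : c ≠ 0) :
    Function.Injective fun w : F ↦ c ^ p ^ k * w + c * w ^ p ^ k := by
  have := Fact.mk hp
  have := charP_of_card_eq_prime_pow (R := F) hF
  intro w₁ w₂ hw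
  set t := (w₁ - w₂) / c
  have hsub : w₁ - w₂ = c * t := (mul_div_cancel₀ _ hc).symm
  have hzero : c ^ (p ^ k + 1) * (t ^ p ^ k + t) = 0 :=
    calc _ = c ^ p ^ k * (w₁ - w₂) + c * (w₁ - w₂) ^ p ^ k := by rw [hsub, mul_pow]; ring
      _ = 0 := by rw [sub_pow_char_pow]; linear_combination hw
  have ht : t ^ p ^ k = -t :=
    eq_neg_of_add_eq_zero_left ((mul_eq_zero.mp hzero).resolve_left (pow_ne_zero _ hc))
  rwa [eq_zero_of_pow_eq_neg hF hodd hmk ht, mul_zero, sub_eq_zero] at hsub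

end FiniteField

theorem stmt_9_general (p m k : ℕ) (hp : p.Prime) (hodd : Odd p)
    (hko : Odd (m / Nat.gcd k m))
    (F : Type) [Field F] [Fintype F] (hF : Fintype.card F = p ^ m)
    (f g : F → F) (u : F → F)
    (h : ∀ w x : F,
      f (x ^ p ^ k * u w + x * (u w) ^ p ^ k) = (g x) ^ p ^ k * w + g x * w ^ p ^ k) :
    (∀ x, g x = 0) ∨ Function.Bijective u := by
  refine or_iff_not_imp_left.mpr fun hg ↦ ?_
  obtain ⟨x₀, hx₀⟩ := not_forall.mp hg
  refine Finite.injective_iff_bijective.mp fun w₁ w₂ huw ↦ ?_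
  apply FiniteField.injective_pow_mul_add_mul_pow hp hF hodd hko hx₀
  simp only [← h, huw]

theorem stmt_9 (p m k : ℕ) (hp : p.Prime) (hodd : Odd p) (hm : Even m) (hm0 : 0 < m)
    (hk1 : 1 ≤ k) (hk2 : k ≤ m - 1) (hko : Odd (m / Nat.gcd k m))
    (F : Type) [Field F] [Fintype F] (hF : Fintype.card F = p ^ m)
    (f g : F → F) (u : F → F)
    (h : ∀ w x : F,
      f (x ^ p ^ k * u w + x * (u w) ^ p ^ k) = (g x) ^ p ^ k * w + g x * w ^ p ^ k) :
    (∀ x, g x = 0) ∨ Function.Bijective u :=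
  stmt_9_general p m k hp hodd hko F hF f g u h
end

section
/- Let M = F_{p^m}, p odd, m even, with q = p^k, r = p^{k+m/2} chosen as in the Göloğlu–Kölsch construction, and let A ∈ M be a non-square. If a, c ∈ M satisfy a^{r^2} c = A^{r+1} a c^{r^2}, then a·c = 0. -/
/-!
With `x = a / c ≠ 0` the equation reads `x ^ (r ^ 2 - 1) = A ^ (r + 1)`, so `B = A / x ^ (r - 1)`
is an `(r + 1)`-th root of unity and differs from `A` by a square. Since `m` is even,
`p ^ 2 - 1` divides `p ^ m - 1`, and for every power `r` of the odd number `p` the 2-adic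
valuation of `r + 1` is smaller than that of `p ^ 2 - 1`. Hence `B ^ ((p ^ m - 1) / 2) = 1`, i.e. `B`, and with it `A`, is a square.
-/

theorem Nat.exists_odd_two_mul_pow_add_one_dvd {p : ℕ} (hp : Odd p) (j : ℕ) :
    ∃ s, Odd s ∧ 2 * (p ^ j + 1) ∣ s * (p ^ 2 - 1) := by
  obtain ⟨w, rfl⟩ := hp
  have hsq : (2 * w + 1) ^ 2 - 1 = 4 * w * (w + 1) := by
    rw [show (2 * w + 1) ^ 2 = 4 * w * (w + 1) + 1 by ring, Nat.add_sub_cancel]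
  -- `p ^ 2 ≡ 1` modulo `2 * (p + 1)`, so `p ^ j + 1` is `2 * odd` for even `j` and
  -- `(p + 1) * odd` for odd `j`.
  have hmod : (2 * w + 1) ^ 2 % (4 * (w + 1)) = 1 := by
    rw [show (2 * w + 1) ^ 2 = 4 * (w + 1) * w + 1 by ring, Nat.mul_add_mod]
    exact Nat.mod_eq_of_lt (by omega)
  have hpow (i : ℕ) : ((2 * w + 1) ^ 2) ^ i % (4 * (w + 1)) = 1 := by
    rw [Nat.pow_mod, hmod, one_pow]; exact Nat.mod_eq_of_lt (by omega)
  obtain ⟨i, rfl | rfl⟩ := Nat.even_or_odd' j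
  · set q := ((2 * w + 1) ^ (2 * i) + 1) / (4 * (w + 1))
    have hrem : ((2 * w + 1) ^ (2 * i) + 1) % (4 * (w + 1)) = 2 := by
      rw [pow_mul, Nat.add_mod, hpow, Nat.one_mod_eq_one.mpr (by omega)]
      exact Nat.mod_eq_of_lt (by omega)
    have hdiv := Nat.div_add_mod ((2 * w + 1) ^ (2 * i) + 1) (4 * (w + 1))
    rw [hrem] at hdiv
    refine ⟨2 * ((w + 1) * q) + 1, odd_two_mul_add_one _, ?_⟩
    rw [← hdiv, hsq]
    exact ⟨w * (w + 1), by ring⟩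
  · set q := ((2 * w + 1) ^ (2 * i + 1) + 1) / (4 * (w + 1))
    have hrem : ((2 * w + 1) ^ (2 * i + 1) + 1) % (4 * (w + 1)) = 2 * (w + 1) := by
      rw [pow_succ, pow_mul, Nat.add_mod, Nat.mul_mod, hpow, one_mul, Nat.mod_mod,
        Nat.one_mod_eq_one.mpr (by omega), Nat.mod_eq_of_lt (by omega : 2 * w + 1 < 4 * (w + 1))]
      exact Nat.mod_eq_of_lt (by omega)
    have hdiv := Nat.div_add_mod ((2 * w + 1) ^ (2 * i + 1) + 1) (4 * (w + 1))
    rw [hrem] at hdiv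
    refine ⟨2 * q + 1, odd_two_mul_add_one _, ?_⟩
    rw [← hdiv, hsq]
    exact ⟨w, by ring⟩

theorem FiniteField.isSquare_of_pow_eq_one {F : Type*} [Field F] [Fintype F]
    (hF : ringChar F ≠ 2) {B : F} {N s : ℕ} (hB : B ^ N = 1) (hs : Odd s)
    (hN : 2 * N ∣ s * (Fintype.card F - 1)) : IsSquare B := by
  rcases eq_or_ne B 0 with rfl | hB0
  · exact IsSquare.zero
  rw [FiniteField.isSquare_iff hF hB0]
  obtain ⟨u, hu⟩ := hN
  have hcard := Nat.two_mul_odd_div_two (FiniteField.odd_card_of_char_ne_two hF)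
  have hpow : (B ^ (Fintype.card F / 2)) ^ s = 1 := by
    rw [← hcard] at hu
    rw [← pow_mul, show Fintype.card F / 2 * s = N * u by linarith, pow_mul, hB, one_pow]
  refine (FiniteField.pow_dichotomy hF hB0).resolve_right fun hneg => ?_
  rw [hneg, hs.neg_one_pow] at hpow
  exact Ring.neg_one_ne_one_of_char_ne_two hF hpow

theorem div_pow_sub_one_eq_of_pow_mul_eq {F : Type*} [Field F] {a c K : F} {n : ℕ}
    (ha : a ≠ 0) (hc : c ≠ 0) (hn : n ≠ 0) (h : a ^ n * c = K * a * c ^ n) :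
    (a / c) ^ (n - 1) = K := by
  obtain ⟨n, rfl⟩ := Nat.exists_eq_succ_of_ne_zero hn
  rw [Nat.succ_sub_one, div_pow, div_eq_iff (pow_ne_zero _ hc)]
  apply mul_right_cancel₀ (mul_ne_zero ha hc)
  rw [pow_succ, pow_succ] at h
  linear_combination h

theorem stmt_10_general (p m k : ℕ) (hodd : Odd p) (hm : Even m)
    (F : Type) [Field F] [Fintype F] (hF : Fintype.card F = p ^ m)
    (A : F) (hA : ¬ IsSquare A) (a c : F)
    (h : a ^ (p ^ (k + m / 2) * p ^ (k + m / 2)) * c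
        = A ^ (p ^ (k + m / 2) + 1) * a * c ^ (p ^ (k + m / 2) * p ^ (k + m / 2))) :
    a * c = 0 := by
  set r := p ^ (k + m / 2)
  by_contra hac
  obtain ⟨ha, hc⟩ := mul_ne_zero_iff.mp hac
  have hchar : ringChar F ≠ 2 := fun h2 => by
    have := FiniteField.even_card_of_char_two h2
    rw [hF, ← Nat.even_iff] at this
    exact Nat.not_even_iff_odd.mpr hodd.pow this
  have hr : Odd r := hodd.pow
  set y := (a / c) ^ (r - 1)
  have hy : IsSquare y := (Nat.Odd.sub_odd hr odd_one).isSquare_pow _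
  have hy0 : y ≠ 0 := pow_ne_zero _ (div_ne_zero ha hc)
  have hAy : (A / y) ^ (r + 1) = 1 := by
    have hr2 : r * r - 1 = (r - 1) * (r + 1) := by
      simpa only [one_mul, mul_comm (r + 1)] using Nat.mul_self_sub_mul_self_eq r 1
    have := div_pow_sub_one_eq_of_pow_mul_eq ha hc (mul_pos hr.pos hr.pos).ne' h
    rw [hr2, pow_mul] at this
    rw [div_pow, ← this, div_self (pow_ne_zero _ hy0)]
  obtain ⟨s, hs, hdvd⟩ := Nat.exists_odd_two_mul_pow_add_one_dvd hodd (k + m / 2)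
  have hcard : 2 * (r + 1) ∣ s * (Fintype.card F - 1) := by
    rw [hF]
    exact hdvd.trans <|
      mul_dvd_mul_left s (Nat.pow_sub_one_dvd_pow_sub_one p (even_iff_two_dvd.mp hm))
  have hsq : IsSquare (A / y) := FiniteField.isSquare_of_pow_eq_one hchar hAy hs hcard
  exact hA (div_mul_cancel₀ A hy0 ▸ hsq.mul hy)

theorem stmt_10 (p m k : ℕ) (hp : p.Prime) (hodd : Odd p) (hm : Even m) (hm0 : 0 < m)
    (hk1 : 1 ≤ k) (hk2 : k ≤ m - 1) (hko : Odd (m / Nat.gcd k m))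
    (F : Type) [Field F] [Fintype F] (hF : Fintype.card F = p ^ m)
    (A : F) (hA : ¬ IsSquare A) (a c : F)
    (h : a ^ (p ^ (k + m / 2) * p ^ (k + m / 2)) * c
        = A ^ (p ^ (k + m / 2) + 1) * a * c ^ (p ^ (k + m / 2) * p ^ (k + m / 2))) :
    a * c = 0 :=
  stmt_10_general p m k hodd hm F hF A hA a c h
end

section
/- Let M = F_{p^m}, p odd, m even, r = p^{k+m/2}, and A ∈ M^× a non-square. Let f : M → M be F_p-linear (written as a linearized polynomial over M). If for all u ∈ M^× the composition x ↦ f(x^r u + A x u^r) is F_{p^e}-linear (where e = gcd(k,m) = 2·gcd(k+m/2,m)), and f is F_{p^d}-semilinear with d = gcd(k+m/2,m), then f = 0. -/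
theorem stmt_13 (p m k : ℕ) (hp : p.Prime) (hodd : Odd p) (hm : Even m) (hm0 : 0 < m)
    (hk1 : 1 ≤ k) (hk2 : k ≤ m - 1) (hko : Odd (m / Nat.gcd k m))
    (F : Type) [Field F] [Fintype F] (hF : Fintype.card F = p ^ m)
    (A : F) (hA : ¬ IsSquare A)
    (f : F → F) (hadd : ∀ x y : F, f (x + y) = f x + f y)
    -- f is semilinear over D = F_{p^d}, d = gcd(k + m/2, m)
    (hsemi : ∃ j : ℕ, ∀ a x : F, a ^ p ^ Nat.gcd (k + m / 2) m = a →
      f (a * x) = a ^ p ^ j * f x)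
    -- for all u ≠ 0 the composition x ↦ f(x^r u + A x u^r) is F_{p^e}-linear, e = gcd(k,m)
    (hlin : ∀ u : F, u ≠ 0 → ∀ a x : F, a ^ p ^ Nat.gcd k m = a →
      f ((a * x) ^ p ^ (k + m / 2) * u + A * (a * x) * u ^ p ^ (k + m / 2))
        = a * f (x ^ p ^ (k + m / 2) * u + A * x * u ^ p ^ (k + m / 2))) :
    ∀ x : F, f x = 0 := by
  classical
  haveI := Fact.mk hp
  have hp2 : 2 ≤ p := hp.two_le
  -- characteristic of F is p
  haveI hcharF : CharP F p := by
    haveI := ringChar.charP F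
    obtain ⟨n, hqp, hcard⟩ := FiniteField.card F (ringChar F)
    have hdvd : p ∣ (ringChar F) ^ (n : ℕ) := by
      rw [← hcard, hF]; exact dvd_pow_self p hm0.ne'
    have : p = ringChar F :=
      (Nat.prime_dvd_prime_iff_eq hp hqp).mp (hp.dvd_of_dvd_pow hdvd)
    rw [this]; exact ringChar.charP F
  -- basic facts about f
  have f0 : f 0 = 0 := by
    have h := hadd 0 0; rw [add_zero] at h
    exact (add_eq_right.mp h.symm)
  have fneg : ∀ x : F, f (-x) = - f x := by
    intro x
    have h := hadd x (-x); rw [add_neg_cancel, f0] at h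
    exact (neg_eq_of_add_eq_zero_right h.symm).symm
  have fsub : ∀ x y : F, f (x - y) = f x - f y := by
    intro x y
    rw [sub_eq_add_neg, hadd, fneg]; ring
  -- abbreviations
  set e := Nat.gcd k m with he
  set s := k + m / 2 with hs
  have hek : e ∣ k := Nat.gcd_dvd_left k m
  have hem : e ∣ m := Nat.gcd_dvd_right k m
  have he1 : 1 ≤ e := Nat.gcd_pos_of_pos_left m hk1
  -- e is even
  have heEven : Even e := by
    rcases Nat.even_or_odd e with h | h
    · exact h
    · exfalso
      obtain ⟨c, hc⟩ := hem
      have hcm : c = m / e := by rw [hc]; exact (Nat.mul_div_cancel_left c he1).symm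
      have hoc : Odd c := hcm ▸ hko
      have : Odd m := by rw [hc]; exact h.mul hoc
      exact (Nat.not_even_iff_odd.mpr this) hm
  obtain ⟨d, hd⟩ : ∃ d, e = 2 * d := by
    obtain ⟨t, ht⟩ := heEven; exact ⟨t, by omega⟩
  have hd1 : 1 ≤ d := by omega
  -- s = e * q + d for some q
  obtain ⟨q, hq⟩ : ∃ q, s = e * q + d := by
    obtain ⟨a, ha⟩ := hek
    obtain ⟨j, hj⟩ : Odd (m / e) := hko
    have hme : m = e * (m / e) := (Nat.mul_div_cancel' hem).symm
    have hm2 : m / 2 = d * (2 * j + 1) := by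
      have : m = 2 * (d * (2 * j + 1)) := by rw [hme, hj, hd]; ring
      omega
    exact ⟨a + j, by rw [hs, ha, hm2, hd]; ring⟩
  -- m = 2 * (m / 2)
  have hm2' : m = 2 * (m / 2) := by
    obtain ⟨t, ht⟩ := hm; omega
  -- Frobenius powers
  have hfrob_pow : ∀ (x : F) (a b : ℕ), (x ^ p ^ a) ^ p ^ b = x ^ p ^ (a + b) := by
    intro x a b; rw [← pow_mul, ← pow_add]
  -- x ↦ x^{p^t} is surjective
  have hfrob_surj : ∀ t : ℕ, ∀ y : F, ∃ x : F, x ^ p ^ t = y := by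
    intro t
    have hinj : Function.Injective (fun x : F => x ^ p ^ t) := by
      intro x y hxy
      have h1 : (x - y) ^ p ^ t = 0 := by
        rw [sub_pow_char_pow]; simpa using sub_eq_zero_of_eq hxy
      have h2 : x - y = 0 :=
        (pow_eq_zero_iff (Nat.pos_of_ne_zero ?_).ne' ).mp h1
      · exact sub_eq_zero.mp h2
      · exact (Nat.pow_pos hp.pos).ne'
    intro y
    obtain ⟨x, hx⟩ := Finite.surjective_of_injective hinj y
    exact ⟨x, hx⟩
  -- the multiplicative generator
  obtain ⟨g, hg⟩ := IsCyclic.exists_generator (α := Fˣ)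
  have hgord : orderOf g = p ^ m - 1 := by
    rw [orderOf_eq_card_of_forall_mem_zpowers hg, Nat.card_units,
      Nat.card_eq_fintype_card, hF]
  have hN1 : 1 ≤ p ^ m - 1 := by
    have h2m : 2 ≤ p ^ m := by
      calc 2 ≤ p := hp2
      _ = p ^ 1 := (pow_one p).symm
      _ ≤ p ^ m := Nat.pow_le_pow_right hp.pos hm0
    omega
  -- divisibility reduction lemma
  have red : ∀ t : ℕ, (p ^ m - 1 ∣ p ^ (m + t) - 1) → p ^ m - 1 ∣ p ^ t - 1 := by
    intro t h
    have hX1 : 1 ≤ p ^ t := Nat.one_le_pow _ _ hp.pos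
    have hmul : p ^ t * p ^ m = p ^ (m + t) := by rw [← pow_add, add_comm]
    have hZ : p ^ t * (p ^ m - 1) + p ^ t = p ^ (m + t) := by
      rw [Nat.mul_sub, mul_one, ← hmul]
      have : p ^ t ≤ p ^ t * p ^ m := Nat.le_mul_of_pos_right _ (Nat.pos_of_ne_zero (by positivity))
      omega
    have hdvd1 : p ^ m - 1 ∣ p ^ t * (p ^ m - 1) := dvd_mul_left _ _
    have heq : (p ^ (m + t) - 1) - p ^ t * (p ^ m - 1) = p ^ t - 1 := by
      set Z := p ^ t * (p ^ m - 1); omega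
    exact heq ▸ Nat.dvd_sub h hdvd1
  -- existence of c with c^{p^{2s}} ≠ c
  have hc0 : ∃ c : F, c ^ p ^ (2 * s) ≠ c := by
    by_contra hc; push_neg at hc
    have hgc : (g : Fˣ) ^ p ^ (2 * s) = g := by
      ext; rw [Units.val_pow_eq_pow_val]; exact hc g
    have hpos : 1 ≤ p ^ (2 * s) := Nat.one_le_pow _ _ hp.pos
    have h1 : g ^ (p ^ (2 * s) - 1) = 1 := by
      apply mul_right_cancel (b := g)
      rw [one_mul, ← pow_succ, Nat.sub_add_cancel hpos, hgc]
    have h2 : p ^ m - 1 ∣ p ^ (2 * s) - 1 := hgord ▸ orderOf_dvd_of_pow_eq_one h1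
    have h2s : 2 * s = m + 2 * k := by omega
    rw [h2s] at h2
    have h3 : p ^ m - 1 ∣ p ^ (2 * k) - 1 := red _ h2
    rcases lt_trichotomy (2 * k) m with hlt | heq2 | hgt
    · have hp2k : 1 ≤ p ^ (2 * k) - 1 := by
        have : 2 ≤ p ^ (2 * k) := by
          calc 2 ≤ p := hp2
          _ = p ^ 1 := (pow_one p).symm
          _ ≤ p ^ (2 * k) := Nat.pow_le_pow_right hp.pos (by omega)
        omega
      have hle := Nat.le_of_dvd (by omega) h3
      have : p ^ (2 * k) < p ^ m := Nat.pow_lt_pow_right hp.one_lt hlt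
      omega
    · -- 2k = m : contradicts hko
      have hkm : k ∣ m := ⟨2, by omega⟩
      have hek' : e = k := by rw [he]; exact Nat.gcd_eq_left hkm
      have : m / e = 2 := by
        rw [hek', ← heq2, mul_comm]
        exact Nat.mul_div_cancel_left 2 (by omega)
      rw [this] at hko
      exact (by decide : ¬ Odd 2) hko
    · have ht' : 2 * k = m + (2 * k - m) := by omega
      rw [ht'] at h3
      have h4 := red _ h3
      have ht'1 : 1 ≤ 2 * k - m := by omega
      have ht'2 : 2 * k - m < m := by omega
      have hp2k : 2 ≤ p ^ (2 * k - m) := by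
        calc 2 ≤ p := hp2
        _ = p ^ 1 := (pow_one p).symm
        _ ≤ p ^ (2 * k - m) := Nat.pow_le_pow_right hp.pos ht'1
      have hle := Nat.le_of_dvd (by omega) h4
      have : p ^ (2 * k - m) < p ^ m := Nat.pow_lt_pow_right hp.one_lt ht'2
      omega
  -- construction of θ
  have hdvdN : p ^ e - 1 ∣ p ^ m - 1 := by
    have h := Nat.sub_dvd_pow_sub_pow (p ^ e) 1 (m / e)
    rwa [one_pow, ← pow_mul, Nat.mul_div_cancel' hem] at h
  set N := p ^ m - 1 with hN
  set M := N / (p ^ e - 1) with hM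
  have hMN : M * (p ^ e - 1) = N := Nat.div_mul_cancel hdvdN
  have hpe2 : 2 ≤ p ^ e := by
    calc 2 ≤ p := hp2
    _ = p ^ 1 := (pow_one p).symm
    _ ≤ p ^ e := Nat.pow_le_pow_right hp.pos he1
  have hpd2 : 2 ≤ p ^ d := by
    calc 2 ≤ p := hp2
    _ = p ^ 1 := (pow_one p).symm
    _ ≤ p ^ d := Nat.pow_le_pow_right hp.pos hd1
  have hM0 : 0 < M := by
    rcases Nat.eq_zero_or_pos M with h | h
    · rw [h, zero_mul] at hMN; omega
    · exact h
  set b : Fˣ := g ^ M with hb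
  have hb1 : b ^ (p ^ e - 1) = 1 := by
    rw [hb, ← pow_mul, hMN, ← hgord]; exact pow_orderOf_eq_one g
  have hbeU : b ^ p ^ e = b := by
    conv_lhs => rw [show p ^ e = (p ^ e - 1) + 1 by omega]
    rw [pow_succ, hb1, one_mul]
  have hbe : (b : F) ^ p ^ e = (b : F) := by
    rw [← Units.val_pow_eq_pow_val, hbeU]
  have hbd_ne : (b : F) ^ p ^ d ≠ (b : F) := by
    intro hcon
    have hU : b ^ p ^ d = b := by
      ext; rw [Units.val_pow_eq_pow_val]; exact hcon
    have h1 : b ^ (p ^ d - 1) = 1 := by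
      apply mul_right_cancel (b := b)
      rw [one_mul, ← pow_succ, Nat.sub_add_cancel (by omega), hU]
    have h2 : g ^ (M * (p ^ d - 1)) = 1 := by rw [pow_mul, ← hb, h1]
    have h3 : N ∣ M * (p ^ d - 1) := hgord ▸ orderOf_dvd_of_pow_eq_one h2
    rw [← hMN] at h3
    have h4 : p ^ e - 1 ∣ p ^ d - 1 := (Nat.mul_dvd_mul_iff_left hM0).mp h3
    have h5 := Nat.le_of_dvd (by omega) h4
    have : p ^ d < p ^ e := Nat.pow_lt_pow_right hp.one_lt (by omega)
    omega
  set θ : F := (b : F) - (b : F) ^ p ^ d with hθ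
  have hθne : θ ≠ 0 := sub_ne_zero_of_ne (fun h => hbd_ne h.symm)
  have hθd : θ ^ p ^ d = -θ := by
    rw [hθ, sub_pow_char_pow, hfrob_pow]
    rw [show d + d = e by omega, hbe]; ring
  have hθe : θ ^ p ^ e = θ := by
    rw [show e = d + d by omega, ← hfrob_pow, hθd, Odd.neg_pow (hodd.pow), hθd, neg_neg]
  have hθek : ∀ n : ℕ, θ ^ p ^ (e * n) = θ := by
    intro n
    induction n with
    | zero => simp
    | succ n ih => rw [Nat.mul_succ, ← hfrob_pow, ih, hθe]
  have hθs : θ ^ p ^ s = -θ := by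
    rw [hq, ← hfrob_pow, hθek, hθd]
  -- the key identity
  have key : ∀ u : F, u ≠ 0 → ∀ x : F,
      f (θ * (A * x * u ^ p ^ s)) - θ * f (A * x * u ^ p ^ s)
        = f (θ * (x ^ p ^ s * u)) + θ * f (x ^ p ^ s * u) := by
    intro u hu x
    have h := hlin u hu θ x hθe
    have harg : (θ * x) ^ p ^ s * u + A * (θ * x) * u ^ p ^ s
        = θ * (A * x * u ^ p ^ s) - θ * (x ^ p ^ s * u) := by
      rw [mul_pow, hθs]; ring
    rw [harg, fsub, hadd] at h
    linear_combination h
  -- step 1 : ψ = 0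
  have hψc : ∀ (x c : F), c ≠ 0 →
      f (θ * (x ^ p ^ s * c)) + θ * f (x ^ p ^ s * c)
        = f (θ * (x ^ p ^ s * c ^ p ^ (2 * s))) + θ * f (x ^ p ^ s * c ^ p ^ (2 * s)) := by
    intro x c hc
    have h1 := key c hc x
    have h2 := key 1 one_ne_zero (x * c ^ p ^ s)
    have e1 : A * (x * c ^ p ^ s) * (1 : F) ^ p ^ s = A * x * c ^ p ^ s := by
      rw [one_pow]; ring
    have e2 : (x * c ^ p ^ s) ^ p ^ s * (1 : F) = x ^ p ^ s * c ^ p ^ (2 * s) := by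
      rw [mul_one, mul_pow, hfrob_pow, show s + s = 2 * s by ring]
    rw [e1, e2] at h2
    rw [← h1, ← h2]
  have step1 : ∀ z : F, f (θ * z) + θ * f z = 0 := by
    obtain ⟨c, hc⟩ := hc0
    have hcne : c ≠ 0 := by
      rintro rfl; exact hc (by simp [zero_pow (Nat.pow_pos hp.pos).ne'])
    have hδ : c - c ^ p ^ (2 * s) ≠ 0 := sub_ne_zero_of_ne (Ne.symm hc)
    intro z
    obtain ⟨x, hx⟩ := hfrob_surj s (z / (c - c ^ p ^ (2 * s)))
    have h := hψc x c hcne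
    have e3 : x ^ p ^ s * c - x ^ p ^ s * c ^ p ^ (2 * s) = z := by
      rw [← mul_sub, hx, div_mul_cancel₀ _ hδ]
    have h2 : (f (θ * (x ^ p ^ s * c)) + θ * f (x ^ p ^ s * c))
        - (f (θ * (x ^ p ^ s * c ^ p ^ (2 * s))) + θ * f (x ^ p ^ s * c ^ p ^ (2 * s)))
        = f (θ * z) + θ * f z := by
      rw [← e3, mul_sub θ, fsub, fsub]; ring
    linear_combination h - h2
  -- step 2 : φ = 0
  have hAne : A ≠ 0 := by
    intro h; exact hA (h ▸ ⟨0, by ring⟩)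
  have step2 : ∀ w : F, f (θ * w) - θ * f w = 0 := by
    intro w
    have h := key 1 one_ne_zero (A⁻¹ * w)
    have e1 : A * (A⁻¹ * w) * (1 : F) ^ p ^ s = w := by
      field_simp
      simp
    rw [e1] at h
    rw [h]; exact step1 _
  -- conclusion
  have htwo : (2 : F) ≠ 0 := by
    intro h
    have : ((2 : ℕ) : F) = 0 := by exact_mod_cast h
    have hpd : p ∣ 2 := (CharP.cast_eq_zero_iff F p 2).mp this
    have hp2' : p = 2 := (Nat.prime_dvd_prime_iff_eq hp Nat.prime_two).mp hpd
    rw [hp2'] at hodd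
    exact (by decide : ¬ Odd 2) hodd
  intro x
  have h1 := step1 x
  have h2 := step2 x
  have h3 : 2 * (θ * f x) = 0 := by linear_combination h1 - h2
  rcases mul_eq_zero.mp h3 with h | h
  · exact absurd h htwo
  · rcases mul_eq_zero.mp h with h' | h'
    · exact absurd h' hθne
    · exact h'
end
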